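/- Thresholding-induced penalty concavity: for any thresholding function Θ (odd, nondecreasing, unbounded, with 0 ≤ Θ(t;λ) ≤ t for t ≥ 0), the induced penalty P_Θ(t;λ) = ∫_0^{|t|} (Θ^{-1}(u;λ) − u) du satisfies: L_Θ := 1 − ess inf{ dΘ^{-1}(u;λ)/du : u ≥ 0 } equals the smallest constant L such that Δ_{P_Θ} + L·D_2 ≥ 0 (pointwise nonnegativity of the GBF of P_Θ plus L times the quadratic Bregman), i.e., L_Θ = inf{L ∈ ℝ : Δ_{P_Θ}(β,γ) + L(β−γ)²/2 ≥ 0 for all β,γ ∈ ℝ}. -/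

import Mathlib

/-!
Let `f` be the generalized inverse `u ↦ sup {t | Θ t ≤ max u 0}`, a monotone function equal to
`Θ⁻¹` on `(0, ∞)`, and let `m` be the essential infimum of `f'` there. Since a monotone function
satisfies `∫ₐᵇ f' ≤ f b - f a`, the function `u ↦ f u - m u` is nondecreasing on `[0, ∞)`, so
`P t + (1 - m) t² / 2 = ∫₀^|t| (f u - m u) du` is convex and its Bregman gap, which is
`Δ_P + (1 - m) D₂`, is nonnegative. Conversely, if `Δ_P + L D₂ ≥ 0`, adding the inequalities at
`(b, a)` and `(a, b)` and computing the one-sided derivatives of `P` at `a` and `b` by the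
fundamental theorem of calculus gives `(1 - L)(b - a) ≤ f b - f a`, hence `1 - L ≤ m`.
-/

open Filter Topology Set MeasureTheory

noncomputable section

def HasDirDeriv {E : Type*} [AddCommGroup E] [Module ℝ E] (ψ : E → ℝ) (β h : E) (d : ℝ) : Prop :=
  Tendsto (fun ε : ℝ => (ψ (β + ε • h) - ψ β) / ε) (𝓝[>] (0:ℝ)) (𝓝 d)

open intervalIntegral Function

lemma bddAbove_sublevel {Θ : ℝ → ℝ} (hlim : Tendsto Θ atTop atTop) (u : ℝ) :
    BddAbove {t | Θ t ≤ u} := by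
  obtain ⟨T, hT⟩ := eventually_atTop.1 (hlim.eventually_gt_atTop u)
  exact ⟨T, fun t ht => le_of_not_gt fun hTt => (hT t hTt.le).not_ge ht⟩

lemma isCoboundedUnder_ge_ae {α : Type*} [MeasurableSpace α] {μ : Measure α} (hμ : μ ≠ 0)
    (f : α → ℝ) : IsCoboundedUnder (· ≥ ·) (ae μ) f := by
  have : (ae μ).NeBot := ae_neBot.2 hμ
  obtain ⟨n, hn⟩ : ∃ n : ℕ, ∃ᵐ x ∂μ, f x ≤ n := by
    by_contra! h
    obtain ⟨x, hx⟩ := (ae_all_iff.2 h).exists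
    obtain ⟨n, hn⟩ := exists_nat_ge (f x)
    exact (hx n).not_ge hn
  exact .of_frequently_le hn

section Monotone

variable {f : ℝ → ℝ}

lemma Monotone.essInf_deriv_mul_sub_le (hf : Monotone f) {s : Set ℝ} {a b : ℝ} (hab : a ≤ b)
    (hs : Ioc a b ⊆ s) : essInf (deriv f) (volume.restrict s) * (b - a) ≤ f b - f a := by
  set m := essInf (deriv f) (volume.restrict s)
  have hm : ∀ᵐ x ∂volume.restrict (Ioc a b), m ≤ deriv f x :=
    ae_restrict_of_ae_restrict_of_subset hs
      (ae_essInf_le (isBoundedUnder_of ⟨0, fun _ => hf.deriv_nonneg⟩))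
  have hftc := (hf.monotoneOn (uIcc a b)).intervalIntegral_deriv_mem_uIcc
  rw [uIcc_of_le (sub_nonneg.2 (hf hab))] at hftc
  calc m * (b - a) = ∫ _ in a..b, m := by simp [mul_comm]
    _ ≤ ∫ x in a..b, deriv f x := by
      rw [integral_of_le hab, integral_of_le hab]
      exact setIntegral_mono_ae_restrict (integrableOn_const measure_Ioc_lt_top.ne)
        ((hf.monotoneOn _).intervalIntegrable_deriv.1) hm
    _ ≤ f b - f a := hftc.2

lemma Monotone.le_essInf_deriv (hf : Monotone f) {s : Set ℝ} (hs : IsOpen s)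
    (hs0 : volume s ≠ 0) {c : ℝ} (hc : ∀ x ∈ s, ∀ y ∈ s, x < y → c * (y - x) ≤ f y - f x) :
    c ≤ essInf (deriv f) (volume.restrict s) := by
  refine le_essInf_of_ae_le c ?_
    (isCoboundedUnder_ge_ae (by rwa [Ne, Measure.restrict_eq_zero]) _)
  filter_upwards [ae_restrict_mem hs.measurableSet, ae_restrict_of_ae hf.ae_differentiableAt]
    with x hxs hfx
  have hslope : Tendsto (slope f x) (𝓝[>] x) (𝓝 (deriv f x)) :=
    hfx.hasDerivAt.tendsto_slope.mono_left (nhdsWithin_mono x fun _ hy => ne_of_gt hy)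
  refine _root_.ge_of_tendsto hslope ?_
  filter_upwards [self_mem_nhdsWithin, nhdsWithin_le_nhds (hs.mem_nhds hxs)] with y hxy hys
  rw [slope_def_field, le_div_iff₀ (sub_pos.2 hxy)]
  exact hc x hxs y hys hxy

end Monotone

lemma HasDerivWithinAt.hasDirDeriv {F : ℝ → ℝ} {c x h : ℝ} {s : Set ℝ}
    (hF : HasDerivWithinAt F c s x) (hs : ∀ ε : ℝ, 0 < ε → x + ε * h ∈ s) :
    HasDirDeriv F x h (h * c) := by
  have hline : HasDerivWithinAt (fun ε : ℝ => x + ε * h) h (Ioi 0) 0 := by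
    simpa using ((hasDerivAt_id (0:ℝ)).mul_const h).const_add x |>.hasDerivWithinAt
  have hF0 : HasDerivWithinAt F c s (x + 0 * h) := by simpa using hF
  have hcomp := (hasDerivWithinAt_iff_tendsto_slope' (lt_irrefl 0)).1
    (hF0.comp 0 hline fun ε hε => hs ε hε)
  rw [mul_comm] at hcomp
  refine hcomp.congr fun ε => ?_
  simp [slope_def_field, smul_eq_mul]

lemma HasDirDeriv.add {E : Type*} [AddCommGroup E] [Module ℝ E] {ψ φ : E → ℝ} {β h : E}
    {d e : ℝ} (hψ : HasDirDeriv ψ β h d) (hφ : HasDirDeriv φ β h e) :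
    HasDirDeriv (fun x => ψ x + φ x) β h (d + e) :=
  (Tendsto.add hψ hφ).congr fun ε => by ring

lemma ConvexOn.hasDirDeriv_le {E : Type*} [AddCommGroup E] [Module ℝ E] {Q : E → ℝ}
    (hQ : ConvexOn ℝ univ Q) {β h : E} {d : ℝ} (hd : HasDirDeriv Q β h d) :
    d ≤ Q (β + h) - Q β := by
  refine le_of_tendsto hd ?_
  filter_upwards [Ioc_mem_nhdsGT (zero_lt_one' ℝ)] with ε ⟨hε0, hε1⟩
  have hconv := hQ.2 (mem_univ β) (mem_univ (β + h)) (sub_nonneg.2 hε1) hε0.le (by ring)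
  have hpt : (1 - ε) • β + ε • (β + h) = β + ε • h := by
    rw [smul_add, sub_smul, one_smul]; abel
  rw [hpt, smul_eq_mul, smul_eq_mul] at hconv
  rw [div_le_iff₀ hε0]
  linarith

lemma bregman_add_sq_nonneg_of_convexOn {P : ℝ → ℝ} {δP : ℝ → ℝ → ℝ}
    (hδP : ∀ γ h, HasDirDeriv P γ h (δP γ h)) {L : ℝ}
    (hconv : ConvexOn ℝ univ fun t => P t + L * t ^ 2 / 2) (β γ : ℝ) :
    0 ≤ P β - P γ - δP γ (β - γ) + L * (β - γ) ^ 2 / 2 := by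
  have hsq : HasDerivAt (fun t => L * t ^ 2 / 2) (L * γ) γ := by
    refine (((hasDerivAt_pow 2 γ).const_mul L).div_const 2).congr_deriv ?_
    norm_num
    ring
  have hQ := hconv.hasDirDeriv_le
    ((hδP γ (β - γ)).add (hsq.hasDerivWithinAt.hasDirDeriv fun _ _ => mem_univ _))
  simp only [add_sub_cancel] at hQ
  linear_combination hQ

lemma hasDerivWithinAt_integral_abs {g : ℝ → ℝ} {γ c : ℝ} {s s' : Set ℝ}
    [FTCFilter γ (𝓝[s] γ) (𝓝[s'] γ)] (hγ : 0 < γ) (hint : IntervalIntegrable g volume 0 γ)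
    (hmeas : StronglyMeasurableAtFilter g (𝓝[s'] γ))
    (hlim : Tendsto g (𝓝[s'] γ ⊓ ae volume) (𝓝 c)) :
    HasDerivWithinAt (fun t => ∫ u in (0:ℝ)..|t|, g u) c s γ := by
  refine (integral_hasDerivWithinAt_of_tendsto_ae_right hint hmeas hlim).congr_of_eventuallyEq
    ?_ (by rw [abs_of_pos hγ])
  filter_upwards [nhdsWithin_le_nhds (lt_mem_nhds hγ)] with t ht
  rw [abs_of_pos ht]

-- Mathlib's left-sided FTC is stated for the filter `𝓝[≤] b`, which a.e. is `𝓝[<] b`.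
lemma nhdsLE_inf_ae_le_nhdsLT (b : ℝ) : 𝓝[≤] b ⊓ ae volume ≤ 𝓝[<] b :=
  calc 𝓝[≤] b ⊓ ae volume ≤ 𝓝[≤] b ⊓ 𝓟 {b}ᶜ :=
        inf_le_inf_left _ (le_principal_iff.2 (compl_mem_ae_iff.2 Real.volume_singleton))
    _ = 𝓝[<] b := by rw [← nhdsWithin_inter', ← sdiff_eq, Iic_sdiff_right]

lemma MonotoneOn.convexOn_integral {φ : ℝ → ℝ} {a : ℝ} (hφ : MonotoneOn φ (Ici a)) :
    ConvexOn ℝ (Ici a) fun t => ∫ u in a..t, φ u := by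
  have hint : ∀ x ∈ Ici a, ∀ y ∈ Ici a, IntervalIntegrable φ volume x y := fun x hx y hy =>
    (hφ.mono ((ordConnected_Ici).uIcc_subset hx hy)).intervalIntegrable
  refine convexOn_of_slope_mono_adjacent (convex_Ici a) fun {x y z} hx hz hxy hyz => ?_
  have hy : y ∈ Ici a := le_trans hx hxy.le
  have hleft : ∫ u in x..y, φ u ≤ (y - x) * φ y := by
    calc ∫ u in x..y, φ u ≤ ∫ _ in x..y, φ y :=
          integral_mono_on hxy.le (hint x hx y hy) intervalIntegrable_const
            fun u hu => hφ (le_trans hx hu.1) hy hu.2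
      _ = (y - x) * φ y := by simp
  have hright : (z - y) * φ y ≤ ∫ u in y..z, φ u := by
    calc (z - y) * φ y = ∫ _ in y..z, φ y := by simp
      _ ≤ ∫ u in y..z, φ u :=
          integral_mono_on hyz.le intervalIntegrable_const (hint y hy z hz)
            fun u hu => hφ hy (le_trans hy hu.1) hu.1
  rw [integral_interval_sub_left (hint a self_mem_Ici y hy) (hint a self_mem_Ici x hx),
    integral_interval_sub_left (hint a self_mem_Ici z hz) (hint a self_mem_Ici y hy),
    div_le_div_iff₀ (sub_pos.2 hxy) (sub_pos.2 hyz)]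
  nlinarith [mul_le_mul_of_nonneg_right hleft (sub_pos.2 hyz).le,
    mul_le_mul_of_nonneg_right hright (sub_pos.2 hxy).le]

lemma integral_sub_id_add_sq {g : ℝ → ℝ} {s : ℝ} (hg : IntervalIntegrable g volume 0 s)
    (m : ℝ) :
    (∫ u in (0:ℝ)..s, (g u - u)) + (1 - m) * s ^ 2 / 2 = ∫ u in (0:ℝ)..s, (g u - m * u) := by
  rw [integral_sub hg intervalIntegrable_id,
    integral_sub hg (intervalIntegrable_id.const_mul m), intervalIntegral.integral_const_mul,
    integral_id]
  ring

lemma convexOn_integral_abs {φ : ℝ → ℝ} (hφ : MonotoneOn φ (Ici 0)) (hφ0 : 0 ≤ φ 0) :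
    ConvexOn ℝ univ fun t => ∫ u in (0:ℝ)..|t|, φ u := by
  have himage : (fun t : ℝ => |t|) '' univ = Ici 0 := by
    ext x
    exact ⟨fun ⟨t, _, ht⟩ => ht ▸ abs_nonneg t, fun hx => ⟨x, mem_univ x, abs_of_nonneg hx⟩⟩
  have hint : ∀ x ∈ Ici (0:ℝ), IntervalIntegrable φ volume 0 x := fun x hx =>
    (hφ.mono ((ordConnected_Ici).uIcc_subset self_mem_Ici hx)).intervalIntegrable
  have hmono : MonotoneOn (fun t => ∫ u in (0:ℝ)..t, φ u) (Ici 0) := fun x hx y hy hxy => by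
    rw [← sub_nonneg, integral_interval_sub_left (hint y hy) (hint x hx)]
    exact intervalIntegral.integral_nonneg hxy fun u hu =>
      hφ0.trans (hφ self_mem_Ici (hx.trans hu.1) (hx.trans hu.1))
  rw [← himage] at hmono
  exact (himage ▸ hφ.convexOn_integral).comp (convexOn_norm convex_univ) hmono

lemma Monotone.mul_sub_le_of_bregman_add_sq_nonneg {f : ℝ → ℝ} (hf : Monotone f)
    {δP : ℝ → ℝ → ℝ}
    (hδP : ∀ γ h, HasDirDeriv (fun t => ∫ u in (0:ℝ)..|t|, (f u - u)) γ h (δP γ h)) {L : ℝ}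
    (hL : ∀ β γ : ℝ, 0 ≤ (∫ u in (0:ℝ)..|β|, (f u - u)) - (∫ u in (0:ℝ)..|γ|, (f u - u))
      - δP γ (β - γ) + L * (β - γ) ^ 2 / 2)
    {a b : ℝ} (ha : 0 < a) (hab : a < b) : (1 - L) * (b - a) ≤ f b - f a := by
  have hint : ∀ x, IntervalIntegrable (fun u => f u - u) volume 0 x := fun x =>
    hf.intervalIntegrable.sub (continuous_id.intervalIntegrable 0 x)
  have hmeas : ∀ l, StronglyMeasurableAtFilter (fun u => f u - u) l :=
    fun _ => (hf.measurable.sub measurable_id).stronglyMeasurable.stronglyMeasurableAtFilter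
  have hright : δP a (b - a) = (b - a) * (rightLim f a - a) :=
    tendsto_nhds_unique (hδP a (b - a)) <|
      (hasDerivWithinAt_integral_abs (s := Ici a) ha (hint a) (hmeas _)
        (((hf.tendsto_rightLim a).sub (tendsto_id.mono_left nhdsWithin_le_nhds)).mono_left
          inf_le_left)).hasDirDeriv
        fun ε hε => by simp only [mem_Ici]; nlinarith
  have hleft : δP b (a - b) = (a - b) * (leftLim f b - b) :=
    tendsto_nhds_unique (hδP b (a - b)) <|
      (hasDerivWithinAt_integral_abs (s := Iic b) (ha.trans hab) (hint b) (hmeas _)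
        (((hf.tendsto_leftLim b).sub (tendsto_id.mono_left nhdsWithin_le_nhds)).mono_left
          (nhdsLE_inf_ae_le_nhdsLT b))).hasDirDeriv
        fun ε hε => by simp only [mem_Iic]; nlinarith
  have h₁ := hL b a
  have h₂ := hL a b
  rw [hright] at h₁
  rw [hleft] at h₂
  nlinarith [hf.le_rightLim (le_refl a), hf.leftLim_le (le_refl b)]

theorem thresholding_penalty_concavity_general (Θ : ℝ → ℝ)
    (hlim : Tendsto Θ atTop atTop)
    (hbd : ∀ t : ℝ, 0 ≤ t → 0 ≤ Θ t ∧ Θ t ≤ t)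
    (Θinv : ℝ → ℝ) (hΘinv : ∀ u : ℝ, 0 < u → Θinv u = sSup {t : ℝ | Θ t ≤ u})
    (P : ℝ → ℝ) (hP : ∀ t : ℝ, P t = ∫ u in (0:ℝ)..|t|, (Θinv u - u))
    (δP : ℝ → ℝ → ℝ) (hδP : ∀ γ h : ℝ, HasDirDeriv P γ h (δP γ h)) :
    1 - essInf (deriv Θinv) (volume.restrict (Set.Ici (0:ℝ)))
      = sInf {L : ℝ | ∀ β γ : ℝ,
          0 ≤ (P β - P γ - δP γ (β - γ)) + L * (β - γ) ^ 2 / 2} := by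
  set f : ℝ → ℝ := fun u => sSup {t | Θ t ≤ max u 0}
  have hΘ0 : Θ 0 ≤ 0 := (hbd 0 le_rfl).2
  have hf : Monotone f := fun u v huv =>
    csSup_le_csSup (bddAbove_sublevel hlim _) ⟨0, hΘ0.trans (le_max_right u 0)⟩
      fun t ht => ht.trans (max_le_max_right 0 huv)
  have hf0 : 0 ≤ f 0 := le_csSup (bddAbove_sublevel hlim _) (by simpa using hΘ0)
  have hΘf : EqOn Θinv f (Ioi 0) := fun u (hu : 0 < u) => by
    simp only [f, hΘinv u hu, max_eq_left hu.le]
  obtain rfl : P = fun t => ∫ u in (0:ℝ)..|t|, (f u - u) := funext fun t => by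
    rw [hP, integral_of_le (abs_nonneg t), integral_of_le (abs_nonneg t)]
    exact setIntegral_congr_fun measurableSet_Ioc fun u hu => by rw [hΘf hu.1]
  set m := essInf (deriv f) (volume.restrict (Ioi 0))
  have hm : essInf (deriv Θinv) (volume.restrict (Ici 0)) = m := by
    rw [← restrict_Ioi_eq_restrict_Ici]
    exact essInf_congr_ae <| (ae_restrict_iff' measurableSet_Ioi).2 <| .of_forall fun x hx =>
      (hΘf.eventuallyEq_of_mem (isOpen_Ioi.mem_nhds hx)).deriv_eq
  have hφ : MonotoneOn (fun u => f u - m * u) (Ici 0) := fun a ha b _ hab => by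
    have := hf.essInf_deriv_mul_sub_le (s := Ioi 0) hab fun u hu => (mem_Ici.1 ha).trans_lt hu.1
    show f a - m * a ≤ f b - m * b
    linarith
  have hconv :
      ConvexOn ℝ univ fun t => (∫ u in (0:ℝ)..|t|, (f u - u)) + (1 - m) * t ^ 2 / 2 := by
    convert convexOn_integral_abs hφ (by simpa using hf0) using 2 with t
    rw [← sq_abs t, integral_sub_id_add_sq hf.intervalIntegrable]
  have hset : {L : ℝ | ∀ β γ : ℝ, 0 ≤ (∫ u in (0:ℝ)..|β|, (f u - u))
      - (∫ u in (0:ℝ)..|γ|, (f u - u)) - δP γ (β - γ) + L * (β - γ) ^ 2 / 2} = Ici (1 - m) := by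
    ext L
    refine ⟨fun hL => ?_, fun hL β γ => ?_⟩
    · have := hf.le_essInf_deriv isOpen_Ioi (by simp) fun a ha b _ hab =>
        hf.mul_sub_le_of_bregman_add_sq_nonneg hδP hL ha hab
      rw [mem_Ici]
      linarith
    · nlinarith [bregman_add_sq_nonneg_of_convexOn hδP hconv β γ,
        mul_nonneg (sub_nonneg.2 (mem_Ici.1 hL)) (sq_nonneg (β - γ))]
  rw [hm, hset, csInf_Ici]

/-- The concavity index L_Θ of a thresholding-induced penalty equals the smallest constant L
making Δ_{P_Θ} + L·D₂ pointwise nonnegative. -/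
theorem thresholding_penalty_concavity (Θ : ℝ → ℝ)
    (hodd : ∀ t, Θ (-t) = -Θ t) (hmono : Monotone Θ)
    (hlim : Tendsto Θ atTop atTop)
    (hbd : ∀ t : ℝ, 0 ≤ t → 0 ≤ Θ t ∧ Θ t ≤ t)
    (Θinv : ℝ → ℝ) (hΘinv : ∀ u : ℝ, 0 < u → Θinv u = sSup {t : ℝ | Θ t ≤ u})
    (P : ℝ → ℝ) (hP : ∀ t : ℝ, P t = ∫ u in (0:ℝ)..|t|, (Θinv u - u))
    (δP : ℝ → ℝ → ℝ) (hδP : ∀ γ h : ℝ, HasDirDeriv P γ h (δP γ h)) :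
    1 - essInf (deriv Θinv) (volume.restrict (Set.Ici (0:ℝ)))
      = sInf {L : ℝ | ∀ β γ : ℝ,
          0 ≤ (P β - P γ - δP γ (β - γ)) + L * (β - γ) ^ 2 / 2} :=
  thresholding_penalty_concavity_general Θ hlim hbd Θinv hΘinv P hP δP hδP
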